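/- For every n ≥ 1, applying the divided difference operators ∂_n ∘ ∂_{n−1} ∘ ⋯ ∘ ∂_1 to the monomial x_1^n x_2^{n−1} ⋯ x_n yields the monomial x_1^{n−1} x_2^{n−2} ⋯ x_{n−1}. Consequently, for w ∈ S_n the Schubert polynomial 𝔖_w computed inside S_{n+1} (via the standard inclusion S_n ⊂ S_{n+1}) equals 𝔖_w computed inside S_n, so Schubert polynomials are independent of n. -/

import Mathlib

open MvPolynomial
open scoped Classical

/-- The polynomial ring ℤ[x₁,x₂,…]: the variable with index `i : ℕ` represents `x_{i+1}`. -/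
abbrev PolyRing : Type := MvPolynomial ℕ ℤ

/-- The action of the simple transposition `s_{i+1}` on ℤ[x₁,x₂,…]
(exchanging the variables `x_{i+1}` and `x_{i+2}` and fixing all others). -/
noncomputable def sAct (i : ℕ) (f : PolyRing) : PolyRing :=
  rename (Equiv.swap i (i + 1)) f

/-- The divided difference operator `∂_{i+1}`: the unique polynomial `g` with
`(x_{i+1} - x_{i+2}) * g = f - s_{i+1} f` (it exists, and is unique since the
polynomial ring is a domain). -/
noncomputable def divDiff (i : ℕ) (f : PolyRing) : PolyRing :=
  if h : ∃ g : PolyRing, (X i - X (i + 1)) * g = f - sAct i f then h.choose else 0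

/-- Composite divided difference operator `∂_{a₁} ∘ ∂_{a₂} ∘ ⋯ ∘ ∂_{a_k}` along a word
`a = [a₁, a₂, …, a_k]` (so `∂_{a_k}` is applied first). -/
noncomputable def divDiffWord (a : List ℕ) (f : PolyRing) : PolyRing :=
  a.foldr divDiff f

/-- The length `ℓ(w)` (number of inversions) of a permutation of `{1,2,…}`
(indices shifted down by one, so positions are indexed by `ℕ`). -/
noncomputable def len (w : Equiv.Perm ℕ) : ℕ :=
  Set.ncard {p : ℕ × ℕ | p.1 < p.2 ∧ w p.2 < w p.1}

/-- `a = [a₁, …, a_k]` is a reduced word for `w`: the product of the corresponding simple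
transpositions `s_{a₁} s_{a₂} ⋯ s_{a_k}` is `w` and `k = ℓ(w)`, the number of inversions. -/
def IsReducedWord (w : Equiv.Perm ℕ) (a : List ℕ) : Prop :=
  (a.map fun i => Equiv.swap i (i + 1)).prod = w ∧ a.length = len w

/-- The longest element `w₀` of `S_n` (reversing the first `n` positions, with positions
indexed by `ℕ` starting at `0`). -/
def wZero (n : ℕ) : Equiv.Perm ℕ :=
  Function.Involutive.toPerm (fun i => if i < n then n - 1 - i else i) (by
    intro i
    dsimp only
    split_ifs <;> omega)

/-- The staircase monomial `x₁^{n-1} x₂^{n-2} ⋯ x_{n-1}`, the Schubert polynomial of `w₀`. -/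
noncomputable def staircase (n : ℕ) : PolyRing :=
  ∏ i ∈ Finset.range n, X i ^ (n - 1 - i)

/-- The Schubert polynomial of `w` computed inside `S_n`:
`𝔖_w = ∂_{a₁} ∂_{a₂} ⋯ ∂_{a_k} 𝔖_{w₀}` for a reduced word `w⁻¹ w₀ = s_{a₁} s_{a₂} ⋯ s_{a_k}`
(any choice of reduced word gives the same answer). -/
noncomputable def schubertIn (n : ℕ) (w : Equiv.Perm ℕ) : PolyRing :=
  if h : ∃ a : List ℕ, IsReducedWord (w⁻¹ * wZero n) a then divDiffWord h.choose (staircase n)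
  else 0

/-- The Schubert polynomial `𝔖_w` of a finitely supported permutation `w ∈ S_∞`, computed
inside any `S_n` containing `w` (independent of all choices). -/
noncomputable def schubert (w : Equiv.Perm ℕ) : PolyRing :=
  if h : ∃ n : ℕ, ∀ i, w i ≠ i → i < n then schubertIn h.choose w else 0

-- auxiliary development, chunk 1
theorem Equiv.Perm.apply_inv_self (e : Equiv.Perm ℕ) (x : ℕ) : e (e⁻¹ x) = x :=
  e.apply_symm_apply x

theorem Equiv.Perm.inv_apply_self (e : Equiv.Perm ℕ) (x : ℕ) : e⁻¹ (e x) = x :=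
  e.symm_apply_apply x

noncomputable section Aux

private lemma d_ne (i : ℕ) : (X i - X (i+1) : PolyRing) ≠ 0 := by
  intro h
  have h2 : (X i : PolyRing) = X (i+1) := by linear_combination h
  have := MvPolynomial.X_injective h2
  omega

private lemma sAct_involutive (i : ℕ) (f : PolyRing) : sAct i (sAct i f) = f := by
  rw [sAct, sAct, rename_rename]
  have : (⇑(Equiv.swap i (i+1)) ∘ ⇑(Equiv.swap i (i+1))) = id := by
    funext x; simp [Equiv.swap_apply_self]
  rw [this, rename_id_apply]

private lemma divDiff_dvd (i : ℕ) (f : PolyRing) :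
    ∃ g : PolyRing, (X i - X (i + 1)) * g = f - sAct i f := by
  have h : (X i - X (i+1) : PolyRing) ∣ f - sAct i f := by
    induction f using MvPolynomial.induction_on with
    | C a => simp [sAct]
    | add p q hp hq =>
        have : p + q - sAct i (p+q) = (p - sAct i p) + (q - sAct i q) := by
          simp only [sAct, map_add]; ring
        rw [this]; exact dvd_add hp hq
    | mul_X p m hp =>
        have hs : sAct i (p * X m) = sAct i p * X (Equiv.swap i (i+1) m) := by
          simp [sAct]
        have key : p * X m - sAct i (p * X m)
            = (p - sAct i p) * X m + sAct i p * (X m - X (Equiv.swap i (i+1) m)) := by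
          rw [hs]; ring
        rw [key]
        refine dvd_add (Dvd.dvd.mul_right hp _) (Dvd.dvd.mul_left ?_ _)
        rcases eq_or_ne m i with rfl | h1
        · rw [Equiv.swap_apply_left]
        rcases eq_or_ne m (i+1) with rfl | h2
        · rw [Equiv.swap_apply_right]
          exact ⟨-1, by ring⟩
        · rw [Equiv.swap_apply_of_ne_of_ne h1 h2, sub_self]
          exact dvd_zero _
  obtain ⟨g, hg⟩ := h
  exact ⟨g, hg.symm⟩

private lemma divDiff_spec (i : ℕ) (f : PolyRing) :
    (X i - X (i + 1)) * divDiff i f = f - sAct i f := by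
  rw [divDiff, dif_pos (divDiff_dvd i f)]
  exact (divDiff_dvd i f).choose_spec

private lemma divDiff_eq {i : ℕ} {f g : PolyRing}
    (h : (X i - X (i + 1)) * g = f - sAct i f) : divDiff i f = g :=
  mul_left_cancel₀ (d_ne i) ((divDiff_spec i f).trans h.symm)

private lemma sAct_prod (i : ℕ) (s : Finset ℕ) (e : ℕ → ℕ) (hi : i ∉ s) (hi1 : i+1 ∉ s) :
    sAct i (∏ j ∈ s, (X j : PolyRing) ^ e j) = ∏ j ∈ s, (X j : PolyRing) ^ e j := by
  rw [sAct, map_prod]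
  refine Finset.prod_congr rfl fun j hj => ?_
  rw [map_pow, rename_X,
    Equiv.swap_apply_of_ne_of_ne (by rintro rfl; exact hi hj) (by rintro rfl; exact hi1 hj)]

private lemma divDiff_mono (i a : ℕ) (g : PolyRing) (hg : sAct i g = g) :
    divDiff i (X i ^ (a+1) * (X (i+1) ^ a * g)) = X i ^ a * (X (i+1) ^ a * g) := by
  apply divDiff_eq
  have h1 : sAct i (X i ^ (a+1) * (X (i+1) ^ a * g))
      = X (i+1) ^ (a+1) * (X i ^ a * sAct i g) := by
    simp [sAct, map_mul, map_pow, rename_X]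
  rw [h1, hg]; ring

private def MM (n k : ℕ) : PolyRing :=
  ∏ j ∈ Finset.range (n+1), (X j : PolyRing) ^ (if j < k then n-1-j else n-j)

private lemma MM_zero (n : ℕ) : MM n 0 = staircase (n+1) := by
  unfold MM staircase
  refine Finset.prod_congr rfl fun j _ => ?_
  norm_num

private lemma MM_last (n : ℕ) : MM n n = staircase n := by
  unfold MM staircase
  rw [Finset.prod_range_succ]
  have h1 : (X n : PolyRing) ^ (if n < n then n-1-n else n - n) = 1 := by simp
  rw [h1, mul_one]
  refine Finset.prod_congr rfl fun j hj => ?_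
  rw [Finset.mem_range] at hj
  rw [if_pos hj]

private lemma MM_step (n k : ℕ) (hk : k < n) : divDiff k (MM n k) = MM n (k+1) := by
  classical
  set s := ((Finset.range (n+1)).erase k).erase (k+1) with hs
  have hk1 : k ∈ Finset.range (n+1) := by simp; omega
  have hk2 : (k+1) ∈ (Finset.range (n+1)).erase k := by
    simp [Finset.mem_erase]; omega
  have expand : ∀ e : ℕ → ℕ, ∏ j ∈ Finset.range (n+1), (X j : PolyRing) ^ e j
      = X k ^ e k * (X (k+1) ^ e (k+1) * ∏ j ∈ s, (X j : PolyRing) ^ e j) := by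
    intro e
    rw [← Finset.mul_prod_erase _ _ hk1, ← Finset.mul_prod_erase _ _ hk2]
  have hknotmem : k ∉ s := by simp [hs, Finset.mem_erase]
  have hk1notmem : k+1 ∉ s := by simp [hs, Finset.mem_erase]
  have hP : sAct k (∏ j ∈ s, (X j : PolyRing) ^ (if j < k then n-1-j else n-j))
      = ∏ j ∈ s, (X j : PolyRing) ^ (if j < k then n-1-j else n-j) :=
    sAct_prod _ _ _ hknotmem hk1notmem
  have hsame : (∏ j ∈ s, (X j : PolyRing) ^ (if j < k then n-1-j else n-j))
      = ∏ j ∈ s, (X j : PolyRing) ^ (if j < k+1 then n-1-j else n-j) := by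
    refine Finset.prod_congr rfl fun j hj => ?_
    have hjk : j ≠ k := by
      intro h; exact hknotmem (h ▸ hj)
    congr 1
    split_ifs <;> omega
  have e1k : (if k < k then n-1-k else n-k) = (n-k-1)+1 := by simp; omega
  have e1k1 : (if k+1 < k then n-1-(k+1) else n-(k+1)) = n-k-1 := by
    rw [if_neg (by omega)]; omega
  have e2k : (if k < k+1 then n-1-k else n-k) = n-k-1 := by rw [if_pos (by omega)]; omega
  have e2k1 : (if k+1 < k+1 then n-1-(k+1) else n-(k+1)) = n-k-1 := by
    rw [if_neg (by omega)]; omega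
  unfold MM
  rw [expand, expand, e1k, e1k1, e2k, e2k1, hsame]
  rw [← hsame]
  exact divDiff_mono k (n-k-1) _ hP

private lemma part1_aux (n : ℕ) : ∀ k, k ≤ n →
    divDiffWord (List.range k).reverse (MM n 0) = MM n k := by
  intro k
  induction k with
  | zero => intro _; rfl
  | succ k ih =>
      intro h
      rw [List.range_succ, List.reverse_append]
      show divDiff k (divDiffWord (List.range k).reverse (MM n 0)) = _
      rw [ih (by omega)]
      exact MM_step n k (by omega)

private lemma part1 (n : ℕ) :
    divDiffWord (List.range n).reverse (staircase (n+1)) = staircase n := by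
  rw [← MM_zero, part1_aux n n le_rfl, MM_last]

end Aux
-- chunk 2 : inversions and length
noncomputable section Aux2

private def Invs (w : Equiv.Perm ℕ) : Set (ℕ × ℕ) := {p | p.1 < p.2 ∧ w p.2 < w p.1}

private lemma len_def (w : Equiv.Perm ℕ) : len w = (Invs w).ncard := rfl

private def FS (w : Equiv.Perm ℕ) : Prop := ∃ n, ∀ i, w i ≠ i → i < n

private lemma fs_fix {w : Equiv.Perm ℕ} {n : ℕ} (h : ∀ i, w i ≠ i → i < n) {i : ℕ}
    (hi : n ≤ i) : w i = i := by
  by_contra hc; exact absurd (h i hc) (by omega)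

private lemma fs_lt {w : Equiv.Perm ℕ} {n : ℕ} (h : ∀ i, w i ≠ i → i < n) {i : ℕ}
    (hi : i < n) : w i < n := by
  by_contra hc
  push_neg at hc
  have h1 : w (w i) = w i := fs_fix h hc
  have h2 : w i = i := w.injective h1
  omega

private lemma invs_finite' {w : Equiv.Perm ℕ} {n : ℕ} (h : ∀ i, w i ≠ i → i < n) :
    (Invs w).Finite := by
  apply Set.Finite.subset ((Set.finite_Iio n).prod (Set.finite_Iio n))
  rintro ⟨p, q⟩ ⟨h1, h2⟩
  dsimp only at h1 h2
  have hq : q < n := by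
    by_contra hc
    push_neg at hc
    have hwq : w q = q := fs_fix h hc
    have hwp : w p ≠ p := by omega
    have := fs_lt h (h p hwp)
    omega
  exact ⟨by simp; omega, by simpa using hq⟩

private lemma fs_one : FS 1 := ⟨0, fun i hi => absurd rfl hi⟩

private lemma fs_swap (i : ℕ) : FS (Equiv.swap i (i+1)) := by
  refine ⟨i+2, fun j hj => ?_⟩
  by_contra hc
  push_neg at hc
  exact hj (Equiv.swap_apply_of_ne_of_ne (by omega) (by omega))

private lemma fs_mul {u v : Equiv.Perm ℕ} (hu : FS u) (hv : FS v) : FS (u * v) := by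
  obtain ⟨n, hn⟩ := hu
  obtain ⟨m, hm⟩ := hv
  refine ⟨max n m, fun i hi => ?_⟩
  by_contra hc
  push_neg at hc
  have h1 : v i = i := fs_fix hm (le_trans (le_max_right n m) hc)
  have h2 : u i = i := fs_fix hn (le_trans (le_max_left n m) hc)
  exact hi (by simp [Equiv.Perm.mul_apply, h1, h2])

private lemma fs_inv {w : Equiv.Perm ℕ} (hw : FS w) : FS w⁻¹ := by
  obtain ⟨n, hn⟩ := hw
  refine ⟨n, fun i hi => ?_⟩
  apply hn
  intro hc
  refine hi ?_
  apply w.injective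
  rw [Equiv.Perm.apply_inv_self, hc]

private lemma fs_finite {w : Equiv.Perm ℕ} (hw : FS w) : (Invs w).Finite := by
  obtain ⟨n, hn⟩ := hw
  exact invs_finite' hn

private lemma apply_eq_iff (w : Equiv.Perm ℕ) (p b : ℕ) : w p = b ↔ p = w⁻¹ b :=
  ⟨fun h => by rw [← h, Equiv.Perm.inv_apply_self], fun h => by rw [h, Equiv.Perm.apply_inv_self]⟩

private lemma mem_invs_swap (w : Equiv.Perm ℕ) (i p q : ℕ) (hpq : p < q) :
    ((p, q) ∈ Invs (Equiv.swap i (i+1) * w) ↔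
      (if (w p = i ∧ w q = i+1) ∨ (w p = i+1 ∧ w q = i) then w p < w q else w q < w p)) := by
  have hne : w p ≠ w q := fun h => by have := w.injective h; omega
  simp only [Invs, Set.mem_setOf_eq, Equiv.Perm.mul_apply, hpq, true_and]
  rw [Equiv.swap_apply_def, Equiv.swap_apply_def]
  split_ifs <;> omega

private lemma invs_swap_mul_lt {w : Equiv.Perm ℕ} {i : ℕ} (hlt : w⁻¹ i < w⁻¹ (i+1)) :
    Invs (Equiv.swap i (i+1) * w) = insert (w⁻¹ i, w⁻¹ (i+1)) (Invs w) := by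
  ext ⟨p, q⟩
  by_cases hpq : p < q
  · rw [mem_invs_swap w i p q hpq]
    simp only [Set.mem_insert_iff, Prod.mk.injEq, Invs, Set.mem_setOf_eq, hpq, true_and]
    by_cases hC : (w p = i ∧ w q = i+1) ∨ (w p = i+1 ∧ w q = i)
    · rw [if_pos hC]
      rcases hC with ⟨hp, hq⟩ | ⟨hp, hq⟩
      · have hp' : p = w⁻¹ i := (apply_eq_iff w p i).mp hp
        have hq' : q = w⁻¹ (i+1) := (apply_eq_iff w q (i+1)).mp hq
        constructor
        · intro _; exact Or.inl ⟨hp', hq'⟩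
        · intro _; omega
      · have hp' : p = w⁻¹ (i+1) := (apply_eq_iff w p (i+1)).mp hp
        have hq' : q = w⁻¹ i := (apply_eq_iff w q i).mp hq
        exfalso
        omega
    · rw [if_neg hC]
      constructor
      · intro h; exact Or.inr h
      · rintro (⟨hp', hq'⟩ | h)
        · exact absurd (Or.inl ⟨(apply_eq_iff w p i).mpr hp',
            (apply_eq_iff w q (i+1)).mpr hq'⟩) hC
        · exact h
  · constructor
    · rintro ⟨h, -⟩; exact absurd h hpq
    · rintro (h | ⟨h, -⟩)
      · rw [Prod.mk.injEq] at h
        obtain ⟨h1, h2⟩ := h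
        exfalso; omega
      · exact absurd h hpq

private lemma invs_swap_mul_gt {w : Equiv.Perm ℕ} {i : ℕ} (hgt : w⁻¹ (i+1) < w⁻¹ i) :
    Invs (Equiv.swap i (i+1) * w) = Invs w \ {(w⁻¹ (i+1), w⁻¹ i)} := by
  ext ⟨p, q⟩
  by_cases hpq : p < q
  · rw [mem_invs_swap w i p q hpq]
    simp only [Set.mem_diff, Set.mem_singleton_iff, Prod.mk.injEq, Invs, Set.mem_setOf_eq,
      hpq, true_and]
    by_cases hC : (w p = i ∧ w q = i+1) ∨ (w p = i+1 ∧ w q = i)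
    · rw [if_pos hC]
      rcases hC with ⟨hp, hq⟩ | ⟨hp, hq⟩
      · have hp' : p = w⁻¹ i := (apply_eq_iff w p i).mp hp
        have hq' : q = w⁻¹ (i+1) := (apply_eq_iff w q (i+1)).mp hq
        exfalso
        omega
      · have hp' : p = w⁻¹ (i+1) := (apply_eq_iff w p (i+1)).mp hp
        have hq' : q = w⁻¹ i := (apply_eq_iff w q i).mp hq
        constructor
        · intro h; exfalso; omega
        · rintro ⟨-, h2⟩; exact absurd ⟨hp', hq'⟩ h2
    · rw [if_neg hC]
      constructor
      · intro h
        refine ⟨h, ?_⟩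
        rintro ⟨hp', hq'⟩
        exact hC (Or.inr ⟨(apply_eq_iff w p (i+1)).mpr hp', (apply_eq_iff w q i).mpr hq'⟩)
      · rintro ⟨h, -⟩; exact h
  · constructor
    · rintro ⟨h, -⟩; exact absurd h hpq
    · rintro ⟨⟨h, -⟩, -⟩; exact absurd h hpq

private lemma len_swap_mul_lt {w : Equiv.Perm ℕ} (hw : FS w) {i : ℕ}
    (hlt : w⁻¹ i < w⁻¹ (i+1)) : len (Equiv.swap i (i+1) * w) = len w + 1 := by
  have hnm : (w⁻¹ i, w⁻¹ (i+1)) ∉ Invs w := by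
    rintro ⟨-, h2⟩
    simp only [w.apply_inv_self] at h2
    omega
  rw [len_def, len_def, invs_swap_mul_lt hlt,
    Set.ncard_insert_of_notMem hnm (fs_finite hw)]

private lemma len_swap_mul_gt {w : Equiv.Perm ℕ} (hw : FS w) {i : ℕ}
    (hgt : w⁻¹ (i+1) < w⁻¹ i) : len (Equiv.swap i (i+1) * w) + 1 = len w := by
  have hm : (w⁻¹ (i+1), w⁻¹ i) ∈ Invs w := by
    refine ⟨hgt, ?_⟩
    simp only [w.apply_inv_self]
    omega
  rw [len_def, len_def, invs_swap_mul_gt hgt]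
  exact Set.ncard_diff_singleton_add_one hm (fs_finite hw)

private lemma inv_ne_inv (w : Equiv.Perm ℕ) (i : ℕ) : w⁻¹ i ≠ w⁻¹ (i+1) := by
  intro h
  have := w⁻¹.injective h
  omega

private lemma len_inv {w : Equiv.Perm ℕ} : len w⁻¹ = len w := by
  have himg : Invs w⁻¹ = (fun p : ℕ × ℕ => (w p.2, w p.1)) '' Invs w := by
    ext ⟨a, b⟩
    constructor
    · rintro ⟨h1, h2⟩
      exact ⟨(w⁻¹ b, w⁻¹ a), ⟨h2, by simp only [w.apply_inv_self]; exact h1⟩,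
        by simp only [w.apply_inv_self]⟩
    · rintro ⟨⟨p, q⟩, ⟨h1, h2⟩, h3⟩
      obtain ⟨rfl, rfl⟩ : w q = a ∧ w p = b := by
        constructor <;> [exact congrArg Prod.fst h3; exact congrArg Prod.snd h3]
      exact ⟨h2, by simp only [Equiv.Perm.inv_apply_self]; exact h1⟩
  rw [len_def, len_def, himg]
  apply Set.ncard_image_of_injective
  rintro ⟨p1, q1⟩ ⟨p2, q2⟩ h
  simp only [Prod.mk.injEq] at h
  exact Prod.ext (w.injective h.2) (w.injective h.1)

private lemma len_one : len 1 = 0 := by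
  have : Invs 1 = ∅ := by
    ext ⟨p, q⟩
    simp only [Invs, Set.mem_setOf_eq, Set.mem_empty_iff_false, iff_false, not_and,
      Equiv.Perm.one_apply]
    omega
  rw [len_def, this, Set.ncard_empty]

private lemma desc_of_inv (w : Equiv.Perm ℕ) :
    ∀ d p q, p < q → q - p = d → w q < w p → ∃ i, w (i+1) < w i := by
  intro d
  induction d using Nat.strong_induction_on with
  | _ d ih =>
    intro p q h1 h2 h3
    rcases eq_or_lt_of_le (show p + 1 ≤ q by omega) with heq | hlt
    · exact ⟨p, by rw [heq]; exact h3⟩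
    · by_cases hd : w (p+1) < w p
      · exact ⟨p, hd⟩
      · push_neg at hd
        exact ih (q - (p+1)) (by omega) (p+1) q (by omega) rfl (by omega)

private lemma exists_desc {w : Equiv.Perm ℕ} (hfs : FS w) (hw : w ≠ 1) :
    ∃ i, w (i+1) < w i := by
  have hex : ∃ i, w i ≠ i := by
    by_contra hc
    push_neg at hc
    exact hw (Equiv.ext hc)
  classical
  set i := Nat.find hex with hi_def
  have hi : w i ≠ i := Nat.find_spec hex
  have hmin : ∀ j, j < i → w j = j := fun j hj => by
    by_contra hc
    exact Nat.find_min hex (by omega) hc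
  have hgt : i < w i := by
    rcases lt_trichotomy (w i) i with h | h | h
    · have := w.injective (hmin (w i) h)
      omega
    · exact absurd h hi
    · exact h
  have hq : w (w⁻¹ i) = i := w.apply_inv_self i
  have hqi : i < w⁻¹ i := by
    rcases lt_trichotomy (w⁻¹ i) i with h | h | h
    · have := hmin _ h
      rw [this] at hq
      omega
    · rw [h] at hq; omega
    · exact h
  exact desc_of_inv w (w⁻¹ i - i) i (w⁻¹ i) hqi rfl (by omega)

private lemma fs_word : ∀ a : List ℕ, FS ((a.map fun i => Equiv.swap i (i+1)).prod)
  | [] => by simpa using fs_one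
  | (i :: a) => by
      rw [List.map_cons, List.prod_cons]
      exact fs_mul (fs_swap i) (fs_word a)

private lemma len_le_word : ∀ a : List ℕ,
    len ((a.map fun i => Equiv.swap i (i+1)).prod) ≤ a.length
  | [] => by simpa [len_one] using le_refl 0
  | (i :: a) => by
      rw [List.map_cons, List.prod_cons]
      set v := ((a.map fun i => Equiv.swap i (i+1)).prod) with hv
      have hfs : FS v := fs_word a
      have hrec := len_le_word a
      rw [← hv] at hrec
      rcases lt_trichotomy (v⁻¹ i) (v⁻¹ (i+1)) with h | h | h
      · rw [len_swap_mul_lt hfs h]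
        simp only [List.length_cons]
        omega
      · exact absurd h (inv_ne_inv v i)
      · have := len_swap_mul_gt hfs h
        simp only [List.length_cons]
        omega

private lemma exists_red_aux : ∀ k (w : Equiv.Perm ℕ), FS w → len w = k →
    ∃ a, IsReducedWord w a := by
  intro k
  induction k using Nat.strong_induction_on with
  | _ k ih =>
    intro w hfs hk
    by_cases hw : w = 1
    · subst hw
      exact ⟨[], by simp [IsReducedWord, len_one]⟩
    · obtain ⟨i, hi⟩ := exists_desc (fs_inv hfs) (by simpa using hw)
      have hlen : len (Equiv.swap i (i+1) * w) + 1 = len w := by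
        apply len_swap_mul_gt hfs
        simpa using hi
      obtain ⟨a, ha1, ha2⟩ := ih (len (Equiv.swap i (i+1) * w)) (by omega) _
        (fs_mul (fs_swap i) hfs) rfl
      refine ⟨i :: a, ?_, ?_⟩
      · rw [List.map_cons, List.prod_cons, ha1, ← mul_assoc, Equiv.swap_mul_self, one_mul]
      · simp only [List.length_cons, ha2]
        omega

private lemma exists_red {w : Equiv.Perm ℕ} (hfs : FS w) : ∃ a, IsReducedWord w a :=
  exists_red_aux (len w) w hfs rfl

end Aux2
-- chunk 3 : operator relations
noncomputable section Aux3

private def dP (i : ℕ) : PolyRing := X i - X (i+1)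

private lemma dP_ne (i : ℕ) : dP i ≠ 0 := d_ne i

private lemma dP_spec (i : ℕ) (f : PolyRing) : dP i * divDiff i f = f - sAct i f :=
  divDiff_spec i f

private lemma sAct_mul' (i : ℕ) (f g : PolyRing) : sAct i (f * g) = sAct i f * sAct i g := by
  simp only [sAct, map_mul]

private lemma sAct_sub' (i : ℕ) (f g : PolyRing) : sAct i (f - g) = sAct i f - sAct i g := by
  simp only [sAct, map_sub]

private lemma sAct_comp (i j : ℕ) (f : PolyRing) :
    sAct i (sAct j f) =
      rename (fun x => Equiv.swap i (i+1) (Equiv.swap j (j+1) x)) f := by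
  rw [sAct, sAct, rename_rename]
  rfl

private lemma sAct_swap_comm {i j : ℕ} (hij : i+2 ≤ j ∨ j+2 ≤ i) (f : PolyRing) :
    sAct i (sAct j f) = sAct j (sAct i f) := by
  rw [sAct_comp, sAct_comp]
  have hfun : (fun x => Equiv.swap i (i+1) (Equiv.swap j (j+1) x))
      = (fun x => Equiv.swap j (j+1) (Equiv.swap i (i+1) x)) := by
    funext x
    simp only [Equiv.swap_apply_def]
    split_ifs <;> omega
  rw [hfun]

private lemma sAct_comp3 (a b c : ℕ) (f : PolyRing) :
    sAct a (sAct b (sAct c f)) =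
      rename (fun x => Equiv.swap a (a+1) (Equiv.swap b (b+1) (Equiv.swap c (c+1) x))) f := by
  rw [sAct, sAct, sAct, rename_rename, rename_rename]
  rfl

set_option maxHeartbeats 1600000 in
private lemma sAct_braid (i : ℕ) (f : PolyRing) :
    sAct i (sAct (i+1) (sAct i f)) = sAct (i+1) (sAct i (sAct (i+1) f)) := by
  rw [sAct_comp3, sAct_comp3]
  have hfun : (fun x => Equiv.swap i (i+1) (Equiv.swap (i+1) (i+1+1) (Equiv.swap i (i+1) x)))
      = (fun x => Equiv.swap (i+1) (i+1+1) (Equiv.swap i (i+1) (Equiv.swap (i+1) (i+1+1) x))) := by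
    funext x
    simp only [Equiv.swap_apply_def]
    split_ifs <;> omega
  rw [hfun]

private lemma sAct_X_sub (i a b : ℕ) :
    sAct i ((X a - X b : PolyRing)) =
      X (Equiv.swap i (i+1) a) - X (Equiv.swap i (i+1) b) := by
  simp only [sAct, map_sub, rename_X]

private lemma sAct_d_self (i : ℕ) : sAct i (dP i) = - dP i := by
  rw [dP, sAct_X_sub, Equiv.swap_apply_left, Equiv.swap_apply_right]
  ring

private lemma sAct_d_far {i j : ℕ} (hij : i+2 ≤ j ∨ j+2 ≤ i) : sAct i (dP j) = dP j := by
  rw [dP, sAct_X_sub, Equiv.swap_apply_of_ne_of_ne (by omega) (by omega),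
    Equiv.swap_apply_of_ne_of_ne (by omega) (by omega)]

private lemma divDiff_comm {i j : ℕ} (hij : i+2 ≤ j ∨ j+2 ≤ i) (f : PolyRing) :
    divDiff i (divDiff j f) = divDiff j (divDiff i f) := by
  have key : ∀ p q : ℕ, (p+2 ≤ q ∨ q+2 ≤ p) → ∀ g : PolyRing,
      dP q * (dP p * divDiff p (divDiff q g))
        = g - sAct p g - sAct q g + sAct p (sAct q g) := by
    intro p q hpq g
    have h1 : dP q * divDiff q g = g - sAct q g := dP_spec q g
    have h2 : dP p * divDiff p (divDiff q g) = divDiff q g - sAct p (divDiff q g) :=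
      dP_spec p _
    have h3 : sAct p (dP q * divDiff q g) = dP q * sAct p (divDiff q g) := by
      rw [sAct_mul', sAct_d_far (by omega)]
    calc dP q * (dP p * divDiff p (divDiff q g))
        = dP q * (divDiff q g - sAct p (divDiff q g)) := by rw [h2]
      _ = (dP q * divDiff q g) - sAct p (dP q * divDiff q g) := by rw [h3]; ring
      _ = (g - sAct q g) - sAct p (g - sAct q g) := by rw [h1]
      _ = g - sAct p g - sAct q g + sAct p (sAct q g) := by rw [sAct_sub']; ring
  have e1 := key i j hij f
  have e2 := key j i (by omega) f
  have e3 : dP j * (dP i * divDiff i (divDiff j f)) = dP j * (dP i * divDiff j (divDiff i f)) := by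
    rw [e1]
    have : dP j * (dP i * divDiff j (divDiff i f))
        = dP i * (dP j * divDiff j (divDiff i f)) := by ring
    rw [this, e2, sAct_swap_comm hij f]
    ring
  exact mul_left_cancel₀ (dP_ne i) (mul_left_cancel₀ (dP_ne j) e3)

private lemma sAct_invol (i : ℕ) (f : PolyRing) : sAct i (sAct i f) = f :=
  sAct_involutive i f

private lemma braid_key (a b : ℕ) (e : PolyRing)
    (hsB : sAct a (dP b) = e) (htA : sAct b (dP a) = e) (hse : sAct a e = dP b)
    (heAB : e = dP a + dP b) (f : PolyRing) :
    dP a * (dP a * (dP b * (e * divDiff a (divDiff b (divDiff a f)))))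
      = dP a * (f - sAct a f - sAct b f + sAct b (sAct a f) + sAct a (sAct b f)
        - sAct a (sAct b (sAct a f))) := by
  set g1 := divDiff a f with hg1
  set g2 := divDiff b g1 with hg2
  set g3 := divDiff a g2 with hg3
  have h1 : dP a * g1 = f - sAct a f := dP_spec a f
  have h2 : dP b * g2 = g1 - sAct b g1 := dP_spec b g1
  have h3 : dP a * g3 = g2 - sAct a g2 := dP_spec a g2
  -- k1 : e * sAct a g2 = sAct a g1 - sAct a (sAct b g1)
  have k1 : e * sAct a g2 = sAct a g1 - sAct a (sAct b g1) := by
    have := congrArg (sAct a) h2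
    rwa [sAct_mul', hsB, sAct_sub'] at this
  -- p2 : e * sAct b g1 = sAct b f - sAct b (sAct a f)
  have p2 : e * sAct b g1 = sAct b f - sAct b (sAct a f) := by
    have := congrArg (sAct b) h1
    rwa [sAct_mul', htA, sAct_sub'] at this
  -- p3 : dP a * sAct a g1 = f - sAct a f
  have p3 : dP a * sAct a g1 = f - sAct a f := by
    have := congrArg (sAct a) h1
    rw [sAct_mul', sAct_d_self, sAct_sub', sAct_invol] at this
    linear_combination -this
  -- p4 : dP b * sAct a (sAct b g1) = sAct a (sAct b f) - sAct a (sAct b (sAct a f))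
  have p4 : dP b * sAct a (sAct b g1) = sAct a (sAct b f) - sAct a (sAct b (sAct a f)) := by
    have step1 : sAct b (dP a * g1) = sAct b f - sAct b (sAct a f) := by
      rw [congrArg (sAct b) h1, sAct_sub']
    have step2 : sAct b (dP a * g1) = e * sAct b g1 := by
      rw [sAct_mul', htA]
    have := congrArg (sAct a) (step2.symm.trans step1)
    rwa [sAct_mul', hse, sAct_sub'] at this
  linear_combination (dP a * dP b * e) * h3 + (dP a * e) * h2 - (dP a * dP b) * k1
    + e * h1 - dP a * p2 - dP b * p3 + dP a * p4 + (f - sAct a f) * heAB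

private lemma divDiff_braid (i : ℕ) (f : PolyRing) :
    divDiff i (divDiff (i+1) (divDiff i f))
      = divDiff (i+1) (divDiff i (divDiff (i+1) f)) := by
  set e : PolyRing := X i - X (i+2) with he
  have A1 : sAct i (dP (i+1)) = e := by
    rw [dP, sAct_X_sub, Equiv.swap_apply_right,
      Equiv.swap_apply_of_ne_of_ne (by omega) (by omega), he]
  have hsw1 : Equiv.swap (i+1) (i+1+1) (i+2) = i+1 := by
    rw [show i+2 = i+1+1 from rfl, Equiv.swap_apply_right]
  have hsw2 : (i+1+1 : ℕ) = i+2 := rfl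
  have A2 : sAct (i+1) (dP i) = e := by
    rw [dP, sAct_X_sub, Equiv.swap_apply_of_ne_of_ne (by omega) (by omega),
      Equiv.swap_apply_left, hsw2, he]
  have A3 : sAct i e = dP (i+1) := by
    rw [he, sAct_X_sub, Equiv.swap_apply_left,
      Equiv.swap_apply_of_ne_of_ne (by omega) (by omega), dP]
  have A4 : sAct (i+1) e = dP i := by
    rw [he, sAct_X_sub, Equiv.swap_apply_of_ne_of_ne (by omega) (by omega), hsw1, dP]
  have A5 : e = dP i + dP (i+1) := by rw [he, dP, dP]; ring
  have A6 : e = dP (i+1) + dP i := by rw [he, dP, dP]; ring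
  have key1 := braid_key i (i+1) e A1 A2 A3 A5 f
  have key2 := braid_key (i+1) i e A2 A1 A4 A6 f
  have hrhs : (f - sAct i f - sAct (i+1) f + sAct (i+1) (sAct i f) + sAct i (sAct (i+1) f)
        - sAct i (sAct (i+1) (sAct i f)))
      = (f - sAct (i+1) f - sAct i f + sAct i (sAct (i+1) f) + sAct (i+1) (sAct i f)
        - sAct (i+1) (sAct i (sAct (i+1) f))) := by
    linear_combination - sAct_braid i f
  have hene : e ≠ 0 := by
    rw [he]
    intro hc
    have h2 : (X i : PolyRing) = X (i+2) := by linear_combination hc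
    have := MvPolynomial.X_injective h2
    omega
  set L := divDiff i (divDiff (i+1) (divDiff i f)) with hL
  set R := divDiff (i+1) (divDiff i (divDiff (i+1) f)) with hR
  have final : dP i * (dP (i+1) * (dP i * (dP (i+1) * (e * L))))
      = dP i * (dP (i+1) * (dP i * (dP (i+1) * (e * R)))) := by
    linear_combination dP (i+1) * key1 - dP i * key2 + (dP i * dP (i+1)) * hrhs
  exact mul_left_cancel₀ hene (mul_left_cancel₀ (dP_ne (i+1)) (mul_left_cancel₀ (dP_ne i)
    (mul_left_cancel₀ (dP_ne (i+1)) (mul_left_cancel₀ (dP_ne i) final))))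

end Aux3
-- chunk 4 : independence of reduced word
noncomputable section Aux4

private lemma divDiffWord_cons (i : ℕ) (a : List ℕ) (f : PolyRing) :
    divDiffWord (i :: a) f = divDiff i (divDiffWord a f) := rfl

private lemma swap_mul_cancel (i : ℕ) (w : Equiv.Perm ℕ) :
    Equiv.swap i (i+1) * (Equiv.swap i (i+1) * w) = w := by
  rw [← mul_assoc, Equiv.swap_mul_self, one_mul]

private lemma red_cons {w : Equiv.Perm ℕ} {i : ℕ} {a : List ℕ} (hfs : FS w)
    (h : IsReducedWord w (i :: a)) :
    IsReducedWord (Equiv.swap i (i+1) * w) a ∧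
      len (Equiv.swap i (i+1) * w) + 1 = len w ∧ w⁻¹ (i+1) < w⁻¹ i := by
  obtain ⟨hprod, hlen⟩ := h
  rw [List.map_cons, List.prod_cons] at hprod
  have hpa : (a.map fun i => Equiv.swap i (i+1)).prod = Equiv.swap i (i+1) * w := by
    rw [← hprod, swap_mul_cancel]
  rw [List.length_cons] at hlen
  have hle : len (Equiv.swap i (i+1) * w) ≤ a.length := by
    rw [← hpa]; exact len_le_word a
  rcases lt_trichotomy (w⁻¹ i) (w⁻¹ (i+1)) with hc | hc | hc
  · exfalso
    have := len_swap_mul_lt hfs hc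
    omega
  · exact absurd hc (inv_ne_inv w i)
  · have hl2 := len_swap_mul_gt hfs hc
    exact ⟨⟨hpa, by omega⟩, hl2, hc⟩

private lemma inv_mul_swap_apply (w : Equiv.Perm ℕ) (j x : ℕ) :
    (Equiv.swap j (j+1) * w)⁻¹ x = w⁻¹ (Equiv.swap j (j+1) x) := by
  rw [mul_inv_rev, Equiv.swap_inv, Equiv.Perm.mul_apply]

private lemma swap_commute {i j : ℕ} (hij : i+2 ≤ j ∨ j+2 ≤ i) :
    Equiv.swap i (i+1) * Equiv.swap j (j+1) = Equiv.swap j (j+1) * Equiv.swap i (i+1) := by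
  ext x
  simp only [Equiv.Perm.mul_apply, Equiv.swap_apply_def]
  split_ifs <;> omega

set_option maxHeartbeats 1600000 in
private lemma swap_braid_perm (i : ℕ) :
    Equiv.swap i (i+1) * Equiv.swap (i+1) (i+1+1) * Equiv.swap i (i+1)
      = Equiv.swap (i+1) (i+1+1) * Equiv.swap i (i+1) * Equiv.swap (i+1) (i+1+1) := by
  ext x
  simp only [Equiv.Perm.mul_apply, Equiv.swap_apply_def]
  split_ifs <;> omega

set_option maxHeartbeats 1600000 in
private lemma ind_aux : ∀ k (w : Equiv.Perm ℕ), FS w → ∀ a b, IsReducedWord w a →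
    IsReducedWord w b → a.length = k → ∀ f, divDiffWord a f = divDiffWord b f := by
  intro k
  induction k using Nat.strong_induction_on with
  | _ k ih =>
  intro w hfs a b ha hb hak f
  have hbk : b.length = k := by rw [hb.2, ← ha.2, hak]
  cases a with
  | nil =>
    have hw : w = 1 := by
      have := ha.1
      simpa using this.symm
    have hb0 : b = [] := List.length_eq_zero_iff.mp (by simp only [List.length_nil] at hak; omega)
    subst hb0; rfl
  | cons i a' =>
    cases b with
    | nil =>
      exfalso
      have hw : w = 1 := by
        have := hb.1
        simpa using this.symm
      have h2 := ha.2
      rw [hw, len_one] at h2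
      simp at h2
    | cons j b' =>
      obtain ⟨hared, halen, hdesci⟩ := red_cons hfs ha
      obtain ⟨hbred, hblen, hdescj⟩ := red_cons hfs hb
      have hk : len w = k := by rw [← ha.2, hak]
      have hfsi : FS (Equiv.swap i (i+1) * w) := fs_mul (fs_swap i) hfs
      have hfsj : FS (Equiv.swap j (j+1) * w) := fs_mul (fs_swap j) hfs
      have ha'len : a'.length + 1 = k := by rw [← hak, List.length_cons]
      have hb'len : b'.length + 1 = k := by rw [← hbk, List.length_cons]
      have haredlen := hared.2
      have hbredlen := hbred.2
      rw [divDiffWord_cons, divDiffWord_cons]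
      by_cases hij : i = j
      · subst hij
        exact congrArg (divDiff i) (ih a'.length (by omega) _ hfsi a' b' hared hbred rfl f)
      by_cases hadj : j = i+1 ∨ i = j+1
      · -- adjacent case
        have adj : ∀ (p : ℕ) (c d : List ℕ),
            IsReducedWord (Equiv.swap p (p+1) * w) c →
            IsReducedWord (Equiv.swap (p+1) (p+1+1) * w) d →
            w⁻¹ (p+1) < w⁻¹ p → w⁻¹ (p+1+1) < w⁻¹ (p+1) →
            divDiff p (divDiffWord c f) = divDiff (p+1) (divDiffWord d f) := by
          intro p c d hcred hdred hd1 hd2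
          have s1 : Equiv.swap p (p+1) (p+1+1) = p+1+1 :=
            Equiv.swap_apply_of_ne_of_ne (by omega) (by omega)
          have s2 : Equiv.swap (p+1) (p+1+1) (p+1+1) = p+1 := Equiv.swap_apply_right _ _
          have s3 : Equiv.swap p (p+1) (p+1) = p := Equiv.swap_apply_right _ _
          have s4 : Equiv.swap (p+1) (p+1+1) p = p :=
            Equiv.swap_apply_of_ne_of_ne (by omega) (by omega)
          have hfsp : FS (Equiv.swap p (p+1) * w) := fs_mul (fs_swap p) hfs
          have hfsp1 : FS (Equiv.swap (p+1) (p+1+1) * w) := fs_mul (fs_swap (p+1)) hfs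
          have hlp : len (Equiv.swap p (p+1) * w) + 1 = len w := len_swap_mul_gt hfs hd1
          have hlp1 : len (Equiv.swap (p+1) (p+1+1) * w) + 1 = len w :=
            len_swap_mul_gt hfs hd2
          have hd3 : (Equiv.swap (p+1) (p+1+1) * w)⁻¹ (p+1)
              < (Equiv.swap (p+1) (p+1+1) * w)⁻¹ p := by
            simp only [inv_mul_swap_apply, Equiv.swap_apply_left, s4]
            omega
          set u2 := Equiv.swap p (p+1) * (Equiv.swap (p+1) (p+1+1) * w) with hu2
          have hfsu2 : FS u2 := fs_mul (fs_swap p) hfsp1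
          have hlu2 : len u2 + 1 = len (Equiv.swap (p+1) (p+1+1) * w) :=
            len_swap_mul_gt hfsp1 hd3
          have hd4 : u2⁻¹ (p+1+1) < u2⁻¹ (p+1) := by
            simp only [hu2, inv_mul_swap_apply, s1, s2, s3, s4]
            exact hd1
          set v := Equiv.swap (p+1) (p+1+1) * u2 with hv
          have hfsv : FS v := fs_mul (fs_swap (p+1)) hfsu2
          have hlv : len v + 1 = len u2 := len_swap_mul_gt hfsu2 hd4
          obtain ⟨c0, hc01, hc02⟩ := exists_red hfsv
          have hcl := hcred.2
          have hdl := hdred.2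
          -- word 1 : p :: (p+1) :: c0 is reduced for σ_{p+1} w
          have hw1 : IsReducedWord (Equiv.swap (p+1) (p+1+1) * w) (p :: (p+1) :: c0) := by
            constructor
            · rw [List.map_cons, List.map_cons, List.prod_cons, List.prod_cons, hc01, hv,
                swap_mul_cancel, hu2, swap_mul_cancel]
            · simp only [List.length_cons, hc02]
              omega
          -- word 2 : (p+1) :: p :: c0 is reduced for σ_p w
          have hw2 : IsReducedWord (Equiv.swap p (p+1) * w) ((p+1) :: p :: c0) := by
            constructor
            · rw [List.map_cons, List.map_cons, List.prod_cons, List.prod_cons, hc01, hv, hu2]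
              have braid : Equiv.swap (p+1) (p+1+1) * (Equiv.swap p (p+1) *
                  (Equiv.swap (p+1) (p+1+1) * (Equiv.swap p (p+1) *
                    (Equiv.swap (p+1) (p+1+1) * w))))
                  = Equiv.swap p (p+1) * w := by
                have h0 : Equiv.swap (p+1) (p+1+1) * (Equiv.swap p (p+1) *
                    (Equiv.swap (p+1) (p+1+1) * (Equiv.swap p (p+1) *
                      (Equiv.swap (p+1) (p+1+1) * w))))
                    = (Equiv.swap (p+1) (p+1+1) * Equiv.swap p (p+1) *
                      Equiv.swap (p+1) (p+1+1)) * (Equiv.swap p (p+1) *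
                      (Equiv.swap (p+1) (p+1+1) * w)) := by
                  simp only [mul_assoc]
                rw [h0, ← swap_braid_perm p]
                have h1 : Equiv.swap p (p+1) * Equiv.swap (p+1) (p+1+1) * Equiv.swap p (p+1) *
                    (Equiv.swap p (p+1) * (Equiv.swap (p+1) (p+1+1) * w))
                    = Equiv.swap p (p+1) * (Equiv.swap (p+1) (p+1+1) *
                      (Equiv.swap p (p+1) * (Equiv.swap p (p+1) *
                        (Equiv.swap (p+1) (p+1+1) * w)))) := by
                  simp only [mul_assoc]
                rw [h1, swap_mul_cancel, swap_mul_cancel]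
              exact braid
            · simp only [List.length_cons, hc02]
              omega
          have e1 : divDiffWord c f = divDiffWord ((p+1) :: p :: c0) f :=
            ih c.length (by omega) _ hfsp c _ hcred hw2 rfl f
          have e2 : divDiffWord d f = divDiffWord (p :: (p+1) :: c0) f :=
            ih d.length (by omega) _ hfsp1 d _ hdred hw1 rfl f
          rw [e1, e2]
          exact divDiff_braid p (divDiffWord c0 f)
        rcases hadj with h1 | h1
        · subst h1
          exact adj i a' b' hared hbred hdesci hdescj
        · subst h1
          exact (adj j b' a' hbred hared hdescj hdesci).symm
      · -- far-apart case
        have hfar : i+2 ≤ j ∨ j+2 ≤ i := by omega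
        have hdi' : (Equiv.swap i (i+1) * w)⁻¹ (j+1) < (Equiv.swap i (i+1) * w)⁻¹ j := by
          rw [inv_mul_swap_apply, inv_mul_swap_apply,
            Equiv.swap_apply_of_ne_of_ne (by omega) (by omega),
            Equiv.swap_apply_of_ne_of_ne (by omega) (by omega)]
          exact hdescj
        set u := Equiv.swap j (j+1) * (Equiv.swap i (i+1) * w) with hu
        have hfsu : FS u := fs_mul (fs_swap j) hfsi
        have hlu : len u + 1 = len (Equiv.swap i (i+1) * w) := len_swap_mul_gt hfsi hdi'
        obtain ⟨c0, hc01, hc02⟩ := exists_red hfsu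
        have hw1 : IsReducedWord (Equiv.swap i (i+1) * w) (j :: c0) := by
          constructor
          · rw [List.map_cons, List.prod_cons, hc01, hu, swap_mul_cancel]
          · simp only [List.length_cons, hc02]
            omega
        have hw2 : IsReducedWord (Equiv.swap j (j+1) * w) (i :: c0) := by
          constructor
          · rw [List.map_cons, List.prod_cons, hc01, hu]
            have h0 : Equiv.swap i (i+1) * (Equiv.swap j (j+1) * (Equiv.swap i (i+1) * w))
                = (Equiv.swap i (i+1) * Equiv.swap j (j+1)) * (Equiv.swap i (i+1) * w) := by
              simp only [mul_assoc]
            rw [h0, swap_commute hfar]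
            have h1 : (Equiv.swap j (j+1) * Equiv.swap i (i+1)) * (Equiv.swap i (i+1) * w)
                = Equiv.swap j (j+1) * (Equiv.swap i (i+1) * (Equiv.swap i (i+1) * w)) := by
              simp only [mul_assoc]
            rw [h1, swap_mul_cancel]
          · simp only [List.length_cons, hc02]
            omega
        have e1 : divDiffWord a' f = divDiffWord (j :: c0) f :=
          ih a'.length (by omega) _ hfsi a' _ hared hw1 rfl f
        have e2 : divDiffWord b' f = divDiffWord (i :: c0) f :=
          ih b'.length (by omega) _ hfsj b' _ hbred hw2 rfl f
        rw [e1, e2, divDiffWord_cons, divDiffWord_cons]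
        exact divDiff_comm (by omega) (divDiffWord c0 f)

end Aux4
-- chunk 5 : stability assembly
noncomputable section Aux5

private lemma wZero_apply (n x : ℕ) : wZero n x = if x < n then n-1-x else x := rfl

private lemma fs_wZero (n : ℕ) : FS (wZero n) := by
  refine ⟨n, fun i hi => ?_⟩
  by_contra hc
  push_neg at hc
  exact hi (by rw [wZero_apply, if_neg (by omega)])

private def qp (n m : ℕ) : Equiv.Perm ℕ :=
  (((List.range' m (n - m)).reverse).map fun i => Equiv.swap i (i+1)).prod

private lemma fs_qp (n m : ℕ) : FS (qp n m) := fs_word _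

private lemma qp_last (n : ℕ) : qp n n = 1 := by
  unfold qp
  rw [Nat.sub_self]
  rfl

private lemma qp_rec (n m : ℕ) (h : m < n) : qp n m = qp n (m+1) * Equiv.swap m (m+1) := by
  unfold qp
  have h1 : n - m = (n - (m+1)) + 1 := by omega
  rw [h1, List.range'_succ, List.reverse_cons, List.map_append, List.prod_append]
  rfl

private lemma qp_props (n : ℕ) : ∀ k m, m + k = n →
    ((∀ x, x < m → qp n m x = x) ∧ (qp n m m = n) ∧
      (∀ x, m < x → x ≤ n → qp n m x = x - 1) ∧ (∀ x, n < x → qp n m x = x)) := by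
  intro k
  induction k with
  | zero =>
      intro m hm
      have hmn : m = n := by omega
      subst hmn
      rw [qp_last]
      refine ⟨fun x _ => rfl, rfl, fun x h1 h2 => absurd h1 (by omega), fun x _ => rfl⟩
  | succ k ihk =>
      intro m hm
      have hmn : m < n := by omega
      obtain ⟨ih1, ih2, ih3, ih4⟩ := ihk (m+1) (by omega)
      refine ⟨?_, ?_, ?_, ?_⟩
      · intro x hx
        rw [qp_rec n m hmn, Equiv.Perm.mul_apply,
          Equiv.swap_apply_of_ne_of_ne (by omega) (by omega), ih1 x (by omega)]
      · rw [qp_rec n m hmn, Equiv.Perm.mul_apply, Equiv.swap_apply_left, ih2]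
      · intro x h1 h2
        rw [qp_rec n m hmn, Equiv.Perm.mul_apply]
        rcases eq_or_lt_of_le (show m+1 ≤ x by omega) with he | hl
        · subst he
          rw [Equiv.swap_apply_right, ih1 m (by omega)]
          omega
        · rw [Equiv.swap_apply_of_ne_of_ne (by omega) (by omega), ih3 x hl h2]
      · intro x hx
        rw [qp_rec n m hmn, Equiv.Perm.mul_apply,
          Equiv.swap_apply_of_ne_of_ne (by omega) (by omega), ih4 x hx]

private lemma wZero_succ (n : ℕ) : wZero (n+1) = wZero n * qp n 0 := by
  obtain ⟨q1, q2, q3, q4⟩ := qp_props n n 0 (by omega)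
  ext x
  rw [Equiv.Perm.mul_apply]
  rcases Nat.eq_zero_or_pos x with rfl | hx
  · rw [q2, wZero_apply, wZero_apply]
    split_ifs <;> omega
  · by_cases hxn : x ≤ n
    · rw [q3 x hx hxn, wZero_apply, wZero_apply]
      split_ifs <;> omega
    · rw [q4 x (by omega), wZero_apply, wZero_apply]
      split_ifs <;> omega

private lemma len_add (n : ℕ) (u : Equiv.Perm ℕ) (hfsu : FS u)
    (hun : ∀ m, m < n → u m < n) (hfix : u n = n) :
    ∀ k m, m + k = n → len (u * qp n m) = len u + k := by
  intro k
  induction k with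
  | zero =>
      intro m hm
      have hmn : m = n := by omega
      subst hmn
      rw [qp_last, mul_one]
      omega
  | succ k ihk =>
      intro m hm
      have hmn : m < n := by omega
      rw [qp_rec n m hmn, ← mul_assoc]
      set v := u * qp n (m+1) with hv
      have hfsv : FS v := fs_mul hfsu (fs_qp n (m+1))
      obtain ⟨q1, q2, q3, q4⟩ := qp_props n k (m+1) (by omega)
      have hvm : v m = u m := by rw [hv, Equiv.Perm.mul_apply, q1 m (by omega)]
      have hvm1 : v (m+1) = n := by rw [hv, Equiv.Perm.mul_apply, q2, hfix]
      have hasc : v m < v (m+1) := by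
        rw [hvm, hvm1]
        exact hun m hmn
      have hstep : len (v * Equiv.swap m (m+1)) = len v + 1 := by
        have h1 : (v * Equiv.swap m (m+1))⁻¹ = Equiv.swap m (m+1) * v⁻¹ := by
          rw [mul_inv_rev, Equiv.swap_inv]
        have h2 : v⁻¹⁻¹ m < v⁻¹⁻¹ (m+1) := by simpa using hasc
        calc len (v * Equiv.swap m (m+1)) = len ((v * Equiv.swap m (m+1))⁻¹) := len_inv.symm
          _ = len (Equiv.swap m (m+1) * v⁻¹) := by rw [h1]
          _ = len v⁻¹ + 1 := len_swap_mul_lt (fs_inv hfsv) h2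
          _ = len v + 1 := by rw [len_inv]
      rw [hstep, ihk (m+1) (by omega)]
      omega

private lemma divDiffWord_append (a t : List ℕ) (f : PolyRing) :
    divDiffWord (a ++ t) f = divDiffWord a (divDiffWord t f) := by
  unfold divDiffWord
  exact List.foldr_append

end Aux5

theorem schubert_stable' (n : ℕ) (hn : 1 ≤ n) :
    divDiffWord (List.range n).reverse (staircase (n + 1)) = staircase n ∧
    ∀ w : Equiv.Perm ℕ, (∀ i, w i ≠ i → i < n) → schubertIn (n + 1) w = schubertIn n w := by
  constructor
  · exact part1 n
  · intro w hw
    have hwinv : ∀ i, w⁻¹ i ≠ i → i < n := by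
      intro i hi
      apply hw
      intro hc
      refine hi ?_
      apply w.injective
      rw [Equiv.Perm.apply_inv_self, hc]
    have hfsw : FS w⁻¹ := ⟨n, hwinv⟩
    set u := w⁻¹ * wZero n with hu
    have hfsu : FS u := fs_mul hfsw (fs_wZero n)
    have hfix : ∀ i, n ≤ i → u i = i := fun i hi => by
      rw [hu, Equiv.Perm.mul_apply, wZero_apply, if_neg (by omega), fs_fix hwinv hi]
    have hun : ∀ m, m < n → u m < n := fun m hm => by
      rw [hu, Equiv.Perm.mul_apply, wZero_apply, if_pos hm]
      exact fs_lt hwinv (by omega)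
    have hlenadd : len (u * qp n 0) = len u + n :=
      len_add n u hfsu hun (hfix n le_rfl) n 0 (by omega)
    have hu1 : w⁻¹ * wZero (n+1) = u * qp n 0 := by
      rw [wZero_succ, hu, mul_assoc]
    obtain ⟨a0, ha0⟩ := exists_red hfsu
    have hfsu1 : FS (w⁻¹ * wZero (n+1)) := by
      rw [hu1]
      exact fs_mul hfsu (fs_qp n 0)
    have htail_prod : (((List.range n).reverse).map fun i => Equiv.swap i (i+1)).prod
        = qp n 0 := by
      unfold qp
      rw [Nat.sub_zero, ← List.range_eq_range']
    have hbig : IsReducedWord (w⁻¹ * wZero (n+1)) (a0 ++ (List.range n).reverse) := by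
      constructor
      · rw [List.map_append, List.prod_append, ha0.1, htail_prod, hu1]
      · rw [List.length_append, List.length_reverse, List.length_range, ha0.2, hu1, hlenadd]
    have hex1 : ∃ a, IsReducedWord (w⁻¹ * wZero (n+1)) a := ⟨_, hbig⟩
    have hexn : ∃ a, IsReducedWord (w⁻¹ * wZero n) a := ⟨a0, ha0⟩
    rw [schubertIn, schubertIn, dif_pos hex1, dif_pos hexn]
    have step1 : divDiffWord hex1.choose (staircase (n+1))
        = divDiffWord (a0 ++ (List.range n).reverse) (staircase (n+1)) :=
      ind_aux hex1.choose.length _ hfsu1 _ _ hex1.choose_spec hbig rfl _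
    have step3 : divDiffWord hexn.choose (staircase n) = divDiffWord a0 (staircase n) :=
      ind_aux hexn.choose.length _ hfsu _ _ hexn.choose_spec ha0 rfl _
    rw [step1, step3, divDiffWord_append, part1 n]

/-- For every `n ≥ 1`, applying `∂_n ∘ ∂_{n-1} ∘ ⋯ ∘ ∂_1` to the monomial
`x₁^n x₂^{n-1} ⋯ x_n` yields the monomial `x₁^{n-1} x₂^{n-2} ⋯ x_{n-1}`
(in our indexing, `∂_n ∘ ⋯ ∘ ∂_1` is the word `[n-1, n-2, …, 0] = (List.range n).reverse`,
and the two monomials are `staircase (n+1)` and `staircase n`).  Consequently, for `w ∈ S_n`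
the Schubert polynomial `𝔖_w` computed inside `S_{n+1}` equals `𝔖_w` computed inside `S_n`:
Schubert polynomials are independent of `n`. -/
theorem schubert_stable (n : ℕ) (hn : 1 ≤ n) :
    divDiffWord (List.range n).reverse (staircase (n + 1)) = staircase n ∧
    ∀ w : Equiv.Perm ℕ, (∀ i, w i ≠ i → i < n) → schubertIn (n + 1) w = schubertIn n w := by
  exact schubert_stable' n hn
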